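/- arXiv:2010.11041 — 4 statements merged into one kernel-verified Lean document; each statement's English description precedes it below -/
import Mathlib

section
/- Regret bound for AdaRem (Theorem 1). Let d ≥ 1, T ≥ 1, η > 0, λ ∈ [0,1), β ∈ [0,1), ε > 0, and let D_∞, G₂ ≥ 0. Let F ⊆ ℝ^d be a nonempty convex set such that ‖x − y‖_∞ ≤ D_∞ for all x, y ∈ F. For t = 1, …, T let θ_t ∈ F and g_t ∈ ℝ^d with ‖g_t‖₂ ≤ G₂, and let f_t : ℝ^d → ℝ satisfy the subgradient inequality f_t(x) ≥ f_t(θ_t) + ⟨g_t, x − θ_t⟩ for all x ∈ F. Define m_1 = 0 ∈ ℝ^d and m_{t+1} = β·m_t + (1−β)·g_t, and define per-coordinate step sizes η_{t,i} = (η/√t)·(1 + λ^t · g_{t,i}·m_{t,i} / (|g_{t,i}|·max_{1≤j≤d}|m_{t,j}| + ε)) for 1 ≤ i ≤ d. Suppose that for each t = 1, …, T, θ_{t+1} ∈ F and θ_{t+1} minimizes the function x ↦ ∑_{i=1}^d η_{t,i}^{−1}·(x_i − (θ_{t,i} − η_{t,i}·g_{t,i}))² over F. Then for every θ* ∈ F,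 ∑_{t=1}^T (f_t(θ_t) − f_t(θ*)) ≤ (D_∞²·d)/(η·(1−λ)³) · ((5−4λ)·√T + 2λ − 1) + (D_∞²·d)/(2η·(1−λ)) + G₂²·d·η·(2√T − 1). -/
/-!
Each step is a projection in the norm weighted by the inverse rates `(r t i)⁻¹`, so the
Pythagorean inequality for that projection gives the online-mirror-descent bound
`2 ⟨g t, θ t - θ*⟩ ≤ ‖θ t - θ*‖² - ‖θ (t+1) - θ*‖² + ∑ i, r t i * g t i ^ 2`
(both norms weighted by `(r t)⁻¹`). Summing by parts leaves the first distance, the increments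
`((r (t+1) i)⁻¹ - (r t i)⁻¹) * D∞²` and the gradient terms. The AdaRem rate lies in
`η/√t * [1 - λ^t, 1 + λ^t]`, so each increment is at most
`(√(t+1) - √t + 2 √(t+1) λ^t) / (η (1 - λ))`: these telescope and sum geometrically to `O(√T)`,
while `∑ r t i * g t i ^ 2 ≤ 2 η G₂² d ∑ 1/√t ≤ 2 η G₂² d (2√T - 1)`.
-/

open Finset Filter Topology

namespace AdaRem

section WeightedProjection

variable {ι : Type*} [Fintype ι]

def weightedSqDist (w x y : ι → ℝ) : ℝ := ∑ i, w i * (x i - y i) ^ 2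

lemma weightedSqDist_nonneg {w : ι → ℝ} (hw : ∀ i, 0 ≤ w i) (x y : ι → ℝ) :
    0 ≤ weightedSqDist w x y :=
  sum_nonneg fun i _ => mul_nonneg (hw i) (sq_nonneg _)

variable {F : Set (ι → ℝ)} {w y p x : ι → ℝ}

lemma inner_proj_nonneg (hF : Convex ℝ F) (hp : p ∈ F)
    (hmin : ∀ z ∈ F, weightedSqDist w p y ≤ weightedSqDist w z y) (hx : x ∈ F) :
    0 ≤ ∑ i, w i * ((p i - y i) * (x i - p i)) := by
  set B := ∑ i, w i * ((p i - y i) * (x i - p i))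
  set C := weightedSqDist w x p
  have hexpand (s : ℝ) : weightedSqDist w (p + s • (x - p)) y
      = weightedSqDist w p y + s * (2 * B + s * C) := by
    simp only [weightedSqDist, B, C, mul_sum, ← sum_add_distrib]
    refine sum_congr rfl fun i _ => ?_
    simp only [Pi.add_apply, Pi.smul_apply, Pi.sub_apply, smul_eq_mul]
    ring
  have hsegment : ∀ s ∈ Set.Ioc (0 : ℝ) 1, 0 ≤ 2 * B + s * C := fun s hs => by
    have := hmin _ (hF.add_smul_sub_mem hp hx (Set.Ioc_subset_Icc_self hs))
    rw [hexpand] at this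
    exact nonneg_of_mul_nonneg_right (by linarith) hs.1
  -- `2 * B` is the slope at `s = 0` of the objective along the segment from `p` to `x`.
  have hlim : Tendsto (fun s : ℝ => 2 * B + s * C) (𝓝[>] 0) (𝓝 (2 * B)) := by
    refine tendsto_nhdsWithin_of_tendsto_nhds ?_
    simpa using ((continuous_id.mul continuous_const).const_add (2 * B)).tendsto (0 : ℝ)
  have := ge_of_tendsto hlim (eventually_of_mem (Ioc_mem_nhdsGT one_pos) hsegment)
  linarith

lemma weightedSqDist_proj_le (hF : Convex ℝ F) (hw : ∀ i, 0 ≤ w i) (hp : p ∈ F)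
    (hmin : ∀ z ∈ F, weightedSqDist w p y ≤ weightedSqDist w z y) (hx : x ∈ F) :
    weightedSqDist w p x ≤ weightedSqDist w x y := by
  have hsplit : weightedSqDist w x y = weightedSqDist w p y
      + 2 * ∑ i, w i * ((p i - y i) * (x i - p i)) + weightedSqDist w p x := by
    simp only [weightedSqDist, mul_sum, ← sum_add_distrib]
    exact sum_congr rfl fun i _ => by ring
  linarith [inner_proj_nonneg hF hp hmin hx, weightedSqDist_nonneg hw p y]

lemma two_mul_inner_le_of_proj {r θ g : ι → ℝ} (hF : Convex ℝ F) (hr : ∀ i, 0 < r i)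
    (hp : p ∈ F)
    (hmin : ∀ z ∈ F, weightedSqDist r⁻¹ p (θ - r * g) ≤ weightedSqDist r⁻¹ z (θ - r * g))
    (hx : x ∈ F) :
    2 * ∑ i, g i * (θ i - x i)
      ≤ weightedSqDist r⁻¹ θ x - weightedSqDist r⁻¹ p x + ∑ i, r i * g i ^ 2 := by
  have hpyth := weightedSqDist_proj_le (w := r⁻¹) hF (fun i => (inv_pos.2 (hr i)).le) hp hmin hx
  have hexpand : weightedSqDist r⁻¹ x (θ - r * g)
      = weightedSqDist r⁻¹ θ x - 2 * ∑ i, g i * (θ i - x i) + ∑ i, r i * g i ^ 2 := by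
    simp only [weightedSqDist, mul_sum, ← sum_sub_distrib, ← sum_add_distrib]
    refine sum_congr rfl fun i _ => ?_
    have := (hr i).ne'
    simp only [Pi.inv_apply, Pi.sub_apply, Pi.mul_apply]
    field_simp
    ring
  linarith

lemma mul_sq_le_mul_sq {w c x D : ℝ} (hw : w ≤ c) (hc : 0 ≤ c) (hx : |x| ≤ D) :
    w * x ^ 2 ≤ c * D ^ 2 :=
  mul_le_mul hw (sq_abs x ▸ pow_le_pow_left₀ (abs_nonneg x) hx 2) (sq_nonneg x) hc

lemma weightedSqDist_le_card_nsmul {c D : ℝ} (hc : 0 ≤ c) (hw : ∀ i, w i ≤ c)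
    (hxy : ∀ i, |x i - y i| ≤ D) : weightedSqDist w x y ≤ Fintype.card ι • (c * D ^ 2) :=
  sum_le_card_nsmul _ _ _ fun i _ => mul_sq_le_mul_sq (hw i) hc (hxy i)

lemma weightedSqDist_sub_weightedSqDist (w' : ι → ℝ) :
    weightedSqDist w' x y - weightedSqDist w x y = weightedSqDist (w' - w) x y := by
  simp only [weightedSqDist, ← sum_sub_distrib, Pi.sub_apply, sub_mul]

end WeightedProjection

lemma sum_Icc_sub_succ_eq (u : ℕ → ℕ → ℝ) {T : ℕ} (hT : 1 ≤ T) :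
    ∑ t ∈ Icc 1 T, (u t t - u t (t + 1))
      = u 1 1 - u T (T + 1) + ∑ t ∈ Ico 1 T, (u (t + 1) (t + 1) - u t (t + 1)) := by
  induction T, hT using Nat.le_induction with
  | base => simp
  | succ n hn ih =>
    rw [sum_Icc_succ_top (by omega), ih, sum_Ico_succ_top hn]
    ring

theorem regret_le_of_rate_bounds {ι : Type*} [Fintype ι] {F : Set (ι → ℝ)} (hF : Convex ℝ F)
    {D G : ℝ} (hFdiam : ∀ x ∈ F, ∀ y ∈ F, ∀ i, |x i - y i| ≤ D) {T : ℕ} (hT : 1 ≤ T)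
    {θ g r : ℕ → ι → ℝ} {f : ℕ → (ι → ℝ) → ℝ} {lo hi : ℕ → ℝ}
    (hθF : ∀ t ∈ Icc 1 T, θ t ∈ F) (hg : ∀ t ∈ Icc 1 T, ∀ i, |g t i| ≤ G)
    (hsubgrad : ∀ t ∈ Icc 1 T, ∀ x ∈ F, f t (θ t) + ∑ i, g t i * (x i - θ t i) ≤ f t x)
    (hlo : ∀ t ∈ Icc 1 T, 0 < lo t) (hr : ∀ t ∈ Icc 1 T, ∀ i, lo t ≤ r t i ∧ r t i ≤ hi t)
    (hmono : ∀ t ∈ Ico 1 T, lo (t + 1) ≤ hi t)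
    (hproj : ∀ t ∈ Icc 1 T, θ (t + 1) ∈ F ∧ ∀ x ∈ F,
      weightedSqDist (r t)⁻¹ (θ (t + 1)) (θ t - r t * g t)
        ≤ weightedSqDist (r t)⁻¹ x (θ t - r t * g t))
    {θs : ι → ℝ} (hθs : θs ∈ F) :
    2 * ∑ t ∈ Icc 1 T, (f t (θ t) - f t θs)
      ≤ D ^ 2 * Fintype.card ι * ((lo 1)⁻¹ + ∑ t ∈ Ico 1 T, ((lo (t + 1))⁻¹ - (hi t)⁻¹))
        + G ^ 2 * Fintype.card ι * ∑ t ∈ Icc 1 T, hi t := by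
  have hrpos : ∀ t ∈ Icc 1 T, ∀ i, 0 < r t i := fun t ht i => (hlo t ht).trans_le (hr t ht i).1
  set u : ℕ → ℕ → ℝ := fun s t => weightedSqDist (r s)⁻¹ (θ t) θs
  have hstep : ∀ t ∈ Icc 1 T,
      2 * (f t (θ t) - f t θs) ≤ u t t - u t (t + 1) + ∑ i, r t i * g t i ^ 2 := fun t ht => by
    have hsub := hsubgrad t ht θs hθs
    have hinner := two_mul_inner_le_of_proj hF (hrpos t ht) (hproj t ht).1 (hproj t ht).2 hθs
    have hneg : ∑ i, g t i * (θs i - θ t i) = -∑ i, g t i * (θ t i - θs i) := by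
      rw [← sum_neg_distrib]; exact sum_congr rfl fun i _ => by ring
    linarith
  have hfirst : u 1 1 ≤ Fintype.card ι • ((lo 1)⁻¹ * D ^ 2) := by
    have h1 : 1 ∈ Icc 1 T := mem_Icc.2 ⟨le_rfl, hT⟩
    exact weightedSqDist_le_card_nsmul (inv_pos.2 (hlo 1 h1)).le
      (fun i => inv_anti₀ (hlo 1 h1) (hr 1 h1 i).1) (hFdiam _ (hθF 1 h1) _ hθs)
  have hlast : 0 ≤ u T (T + 1) :=
    weightedSqDist_nonneg (fun i => (inv_pos.2 (hrpos T (mem_Icc.2 ⟨hT, le_rfl⟩) i)).le) _ _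
  have hmid : ∀ t ∈ Ico 1 T, u (t + 1) (t + 1) - u t (t + 1)
      ≤ Fintype.card ι • (((lo (t + 1))⁻¹ - (hi t)⁻¹) * D ^ 2) := fun t ht => by
    have ht' : t ∈ Icc 1 T := Ico_subset_Icc_self ht
    have ht1 : t + 1 ∈ Icc 1 T := by simp only [mem_Ico, mem_Icc] at ht ⊢; omega
    rw [weightedSqDist_sub_weightedSqDist]
    refine weightedSqDist_le_card_nsmul (sub_nonneg.2 (inv_anti₀ (hlo _ ht1) (hmono t ht)))
      (fun i => sub_le_sub ?_ ?_) (hFdiam _ (hθF _ ht1) _ hθs)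
    exacts [inv_anti₀ (hlo _ ht1) (hr _ ht1 i).1, inv_anti₀ (hrpos t ht' i) (hr t ht' i).2]
  have hgrad : ∀ t ∈ Icc 1 T, ∑ i, r t i * g t i ^ 2 ≤ Fintype.card ι • (hi t * G ^ 2) :=
    fun t ht => sum_le_card_nsmul _ _ _ fun i _ =>
      mul_sq_le_mul_sq (hr t ht i).2 ((hrpos t ht i).le.trans (hr t ht i).2) (hg t ht i)
  calc 2 * ∑ t ∈ Icc 1 T, (f t (θ t) - f t θs)
      ≤ ∑ t ∈ Icc 1 T, (u t t - u t (t + 1) + ∑ i, r t i * g t i ^ 2) := by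
        rw [mul_sum]; exact sum_le_sum hstep
    _ = u 1 1 - u T (T + 1) + ∑ t ∈ Ico 1 T, (u (t + 1) (t + 1) - u t (t + 1))
          + ∑ t ∈ Icc 1 T, ∑ i, r t i * g t i ^ 2 := by
        rw [sum_add_distrib, sum_Icc_sub_succ_eq u hT]
    _ ≤ Fintype.card ι • ((lo 1)⁻¹ * D ^ 2) - 0
          + ∑ t ∈ Ico 1 T, Fintype.card ι • (((lo (t + 1))⁻¹ - (hi t)⁻¹) * D ^ 2)
          + ∑ t ∈ Icc 1 T, Fintype.card ι • (hi t * G ^ 2) := by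
        gcongr with t ht t ht
        exacts [hmid t ht, hgrad t ht]
    _ = _ := by simp only [nsmul_eq_mul, ← mul_sum, ← sum_mul]; ring

lemma mul_one_add_div_mem_Icc {c ρ a b M ε : ℝ} (hc : 0 ≤ c) (hρ : 0 ≤ ρ) (hb : |b| ≤ M)
    (hε : 0 < ε) :
    c * (1 + ρ * (a * b) / (|a| * M + ε)) ∈ Set.Icc (c * (1 - ρ)) (c * (1 + ρ)) := by
  have hden : 0 < |a| * M + ε := by positivity [(abs_nonneg b).trans hb]
  have hq : |a * b / (|a| * M + ε)| ≤ 1 := by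
    rw [abs_div, abs_mul, abs_of_pos hden]
    exact div_le_one_of_le₀ (by nlinarith [abs_nonneg a]) hden.le
  obtain ⟨hq₁, hq₂⟩ := abs_le.1 hq
  rw [mul_div_assoc]
  constructor <;> gcongr <;> nlinarith

lemma sum_inv_sqrt_le {T : ℕ} (hT : 1 ≤ T) : ∑ t ∈ Icc 1 T, (√t)⁻¹ ≤ 2 * √T - 1 := by
  induction T, hT using Nat.le_induction with
  | base => norm_num
  | succ n hn ih =>
    rw [sum_Icc_succ_top (by omega)]
    have hsq : √(n + 1 : ℕ) ^ 2 = √n ^ 2 + 1 := by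
      rw [Real.sq_sqrt (by positivity), Real.sq_sqrt (by positivity)]; push_cast; ring
    have hpos : 0 < √(n + 1 : ℕ) := Real.sqrt_pos.2 (by positivity)
    have hstep : (√(n + 1 : ℕ))⁻¹ ≤ 2 * (√(n + 1 : ℕ) - √n) := by
      rw [inv_le_iff_one_le_mul₀' hpos]
      nlinarith [sq_nonneg (√(n + 1 : ℕ) - √n)]
    linarith

lemma sub_div_sub_le {s s' a b lam : ℝ} (hs : 0 ≤ s) (hss' : s ≤ s') (ha : 0 ≤ a) (hab : a ≤ b)
    (hb : b ≤ lam) (hlam : lam < 1) :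
    s' / (1 - a) - s / (1 + b) ≤ (s' - s + 2 * s' * b) / (1 - lam) := by
  rw [div_sub_div _ _ (by linarith) (by linarith)]
  apply div_le_div₀ <;> nlinarith

section Rates

variable {η lam : ℝ}

lemma rate_lower_pos (hη : 0 < η) (hlam0 : 0 ≤ lam) (hlam1 : lam < 1) {t : ℕ} (ht : 1 ≤ t) :
    0 < η / √t * (1 - lam ^ t) := by
  have : lam ^ t < 1 := pow_lt_one₀ hlam0 hlam1 (by omega)
  have : 0 < √t := Real.sqrt_pos.2 (by exact_mod_cast ht)
  positivity

lemma rate_lower_succ_le_upper (hη : 0 < η) (hlam0 : 0 ≤ lam) {t : ℕ} (ht : 1 ≤ t) :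
    η / √(t + 1 : ℕ) * (1 - lam ^ (t + 1)) ≤ η / √t * (1 + lam ^ t) := by
  have : 0 < √t := Real.sqrt_pos.2 (by exact_mod_cast ht)
  calc η / √(t + 1 : ℕ) * (1 - lam ^ (t + 1)) ≤ η / √(t + 1 : ℕ) :=
        mul_le_of_le_one_right (by positivity) (by linarith [pow_nonneg hlam0 (t + 1)])
    _ ≤ η / √t := by gcongr; exact_mod_cast t.le_succ
    _ ≤ η / √t * (1 + lam ^ t) :=
        le_mul_of_one_le_right (by positivity) (by linarith [pow_nonneg hlam0 t])

lemma inv_rate_gap_le (hη : 0 < η) (hlam0 : 0 ≤ lam) (hlam1 : lam < 1) {t : ℕ} (ht : 1 ≤ t) :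
    (η / √(t + 1 : ℕ) * (1 - lam ^ (t + 1)))⁻¹ - (η / √t * (1 + lam ^ t))⁻¹
      ≤ (√(t + 1 : ℕ) - √t + 2 * √(t + 1 : ℕ) * lam ^ t) / (η * (1 - lam)) := by
  have hpow : lam ^ (t + 1) ≤ lam ^ t := pow_le_pow_of_le_one hlam0 hlam1.le (by omega)
  have hkey := sub_div_sub_le (Real.sqrt_nonneg t) (s' := √(t + 1 : ℕ))
    (Real.sqrt_le_sqrt (by exact_mod_cast t.le_succ))
    (pow_nonneg hlam0 _) hpow (pow_le_of_le_one hlam0 hlam1.le (by omega)) hlam1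
  calc _ = (√(t + 1 : ℕ) / (1 - lam ^ (t + 1)) - √t / (1 + lam ^ t)) / η := by
        field_simp
    _ ≤ (√(t + 1 : ℕ) - √t + 2 * √(t + 1 : ℕ) * lam ^ t) / (1 - lam) / η := by gcongr
    _ = _ := by rw [div_div, mul_comm (1 - lam)]

lemma sum_inv_rate_gap_le (hη : 0 < η) (hlam0 : 0 ≤ lam) (hlam1 : lam < 1) {T : ℕ} (hT : 1 ≤ T) :
    ∑ t ∈ Ico 1 T, ((η / √(t + 1 : ℕ) * (1 - lam ^ (t + 1)))⁻¹ - (η / √t * (1 + lam ^ t))⁻¹)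
      ≤ (√T - 1 + 2 * √T * (lam / (1 - lam))) / (η * (1 - lam)) := by
  have hgeom : ∑ t ∈ Ico 1 T, 2 * √(t + 1 : ℕ) * lam ^ t ≤ 2 * √T * (lam / (1 - lam)) := by
    calc ∑ t ∈ Ico 1 T, 2 * √(t + 1 : ℕ) * lam ^ t ≤ ∑ t ∈ Ico 1 T, 2 * √T * lam ^ t := by
          refine sum_le_sum fun t ht => ?_
          have : t + 1 ≤ T := (mem_Ico.1 ht).2
          gcongr
      _ ≤ 2 * √T * (lam / (1 - lam)) := by
          rw [← mul_sum]
          gcongr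
          simpa using geom_sum_Ico_le_of_lt_one hlam0 hlam1 (m := 1) (n := T)
  calc _ ≤ ∑ t ∈ Ico 1 T, (√(t + 1 : ℕ) - √t + 2 * √(t + 1 : ℕ) * lam ^ t) / (η * (1 - lam)) :=
        sum_le_sum fun t ht => inv_rate_gap_le hη hlam0 hlam1 (mem_Ico.1 ht).1
    _ ≤ _ := by
        rw [← sum_div, sum_add_distrib, sum_Ico_sub (fun n : ℕ => √n) hT, Nat.cast_one,
          Real.sqrt_one]
        gcongr

lemma sum_rate_upper_le (hη : 0 < η) (hlam0 : 0 ≤ lam) (hlam1 : lam < 1) {T : ℕ} (hT : 1 ≤ T) :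
    ∑ t ∈ Icc 1 T, η / √t * (1 + lam ^ t) ≤ 2 * η * (2 * √T - 1) :=
  calc ∑ t ∈ Icc 1 T, η / √t * (1 + lam ^ t) ≤ ∑ t ∈ Icc 1 T, η / √t * 2 :=
        sum_le_sum fun t _ => by
          gcongr
          linarith [pow_le_one₀ hlam0 hlam1.le (n := t)]
    _ = 2 * η * ∑ t ∈ Icc 1 T, (√t)⁻¹ := by
        rw [mul_sum]; exact sum_congr rfl fun t _ => by ring
    _ ≤ 2 * η * (2 * √T - 1) := by
        gcongr; exact sum_inv_sqrt_le hT

lemma regret_rate_terms_le (hη : 0 < η) (hlam0 : 0 ≤ lam) (hlam1 : lam < 1) {T : ℕ} (hT : 1 ≤ T)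
    {K L : ℝ} (hK : 0 ≤ K) (hL : 0 ≤ L) :
    K * ((η / √(1 : ℕ) * (1 - lam ^ 1))⁻¹
        + ∑ t ∈ Ico 1 T, ((η / √(t + 1 : ℕ) * (1 - lam ^ (t + 1)))⁻¹ - (η / √t * (1 + lam ^ t))⁻¹))
      + L * ∑ t ∈ Icc 1 T, η / √t * (1 + lam ^ t)
    ≤ 2 * (K / (η * (1 - lam) ^ 3) * ((5 - 4 * lam) * √T + 2 * lam - 1)
      + K / (2 * η * (1 - lam)) + L * η * (2 * √T - 1)) := by
  have h1 : 0 < 1 - lam := by linarith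
  have hs : 1 ≤ √T := Real.one_le_sqrt.2 (by exact_mod_cast hT)
  have hgap : (√T - 1 + 2 * √T * (lam / (1 - lam))) / (η * (1 - lam))
      ≤ 2 * ((5 - 4 * lam) * √T + 2 * lam - 1) / (η * (1 - lam) ^ 3) := by
    have hrepr : (√T - 1 + 2 * √T * (lam / (1 - lam))) / (η * (1 - lam))
        = ((√T - 1 + lam * (√T + 1)) * (1 - lam)) / (η * (1 - lam) ^ 3) := by
      field_simp; ring
    rw [hrepr]
    refine div_le_div_of_nonneg_right ?_ (by positivity)
    nlinarith [mul_nonneg hlam0 h1.le, mul_nonneg (mul_nonneg hlam0 h1.le) (sub_nonneg.2 hs)]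
  rw [Nat.cast_one, Real.sqrt_one, div_one, pow_one]
  calc _ ≤ K * ((η * (1 - lam))⁻¹ + 2 * ((5 - 4 * lam) * √T + 2 * lam - 1) / (η * (1 - lam) ^ 3))
          + L * (2 * η * (2 * √T - 1)) := by
        have hsum := (sum_inv_rate_gap_le hη hlam0 hlam1 hT).trans hgap
        have hupper := sum_rate_upper_le hη hlam0 hlam1 hT
        gcongr
    _ = _ := by field_simp; ring

end Rates

end AdaRem

open AdaRem

theorem adarem_regret_bound_general
    (d T : ℕ) (hT : 1 ≤ T)
    (η lam ε Dinf G2 : ℝ)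
    (hη : 0 < η) (hlam0 : 0 ≤ lam) (hlam1 : lam < 1)
    (hε : 0 < ε)
    (F : Set (Fin d → ℝ)) (hFconv : Convex ℝ F)
    (hFdiam : ∀ x ∈ F, ∀ y ∈ F, ∀ i, |x i - y i| ≤ Dinf)
    (θ : ℕ → Fin d → ℝ) (g : ℕ → Fin d → ℝ) (m : ℕ → Fin d → ℝ)
    (f : ℕ → (Fin d → ℝ) → ℝ) (lr : ℕ → Fin d → ℝ)
    (hθF : ∀ t ∈ Finset.Icc 1 T, θ t ∈ F)
    (hg : ∀ t ∈ Finset.Icc 1 T, Real.sqrt (∑ i, g t i ^ 2) ≤ G2)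
    (hsubgrad : ∀ t ∈ Finset.Icc 1 T, ∀ x ∈ F,
      f t (θ t) + ∑ i, g t i * (x i - θ t i) ≤ f t x)
    (hlr : ∀ t, 1 ≤ t → ∀ i,
      lr t i = (η / Real.sqrt t) *
        (1 + lam ^ t * (g t i * m t i) / (|g t i| * (⨆ j, |m t j|) + ε)))
    (hproj : ∀ t ∈ Finset.Icc 1 T,
      θ (t + 1) ∈ F ∧
      ∀ x ∈ F,
        ∑ i, (lr t i)⁻¹ * (θ (t + 1) i - (θ t i - lr t i * g t i)) ^ 2 ≤
          ∑ i, (lr t i)⁻¹ * (x i - (θ t i - lr t i * g t i)) ^ 2) :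
    ∀ θs ∈ F,
      ∑ t ∈ Finset.Icc 1 T, (f t (θ t) - f t θs) ≤
        Dinf ^ 2 * d / (η * (1 - lam) ^ 3) *
            ((5 - 4 * lam) * Real.sqrt T + 2 * lam - 1)
          + Dinf ^ 2 * d / (2 * η * (1 - lam))
          + G2 ^ 2 * d * η * (2 * Real.sqrt T - 1) := by
  intro θs hθs
  have hrate : ∀ t ∈ Icc 1 T, ∀ i,
      lr t i ∈ Set.Icc (η / √t * (1 - lam ^ t)) (η / √t * (1 + lam ^ t)) := fun t ht i => by
    rw [hlr t (mem_Icc.1 ht).1 i]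
    exact mul_one_add_div_mem_Icc (by positivity) (by positivity)
      (le_ciSup (Set.finite_range fun j => |m t j|).bddAbove i) hε
  have hgrad : ∀ t ∈ Icc 1 T, ∀ i, |g t i| ≤ G2 := fun t ht i =>
    (Real.abs_le_sqrt (single_le_sum (fun j _ => sq_nonneg (g t j)) (mem_univ i))).trans (hg t ht)
  have hregret := regret_le_of_rate_bounds hFconv hFdiam hT hθF hgrad hsubgrad
    (fun t ht => rate_lower_pos hη hlam0 hlam1 (mem_Icc.1 ht).1) hrate
    (fun t ht => rate_lower_succ_le_upper hη hlam0 (mem_Ico.1 ht).1) hproj hθs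
  have hterms := regret_rate_terms_le hη hlam0 hlam1 hT
    (K := Dinf ^ 2 * d) (L := G2 ^ 2 * d) (by positivity) (by positivity)
  rw [Fintype.card_fin] at hregret
  linarith

/-- Regret bound for AdaRem (Theorem 1).  The iterates `θ t` follow the AdaRem
update `θ (t+1) = Π_{F, diag(lr t ⁻¹)} (θ t - lr t ⊙ g t)` with per-coordinate
step sizes `lr t i = (η/√t)(1 + λ^t gᵗⁱ mᵗⁱ/(|gᵗⁱ| maxⱼ|mᵗʲ| + ε))` built from
the exponential moving average `m` of the gradients, and the regret against any
comparator `θ* ∈ F` is bounded by `O(√T)`. -/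
theorem adarem_regret_bound
    (d T : ℕ) (hd : 1 ≤ d) (hT : 1 ≤ T)
    (η lam β ε Dinf G2 : ℝ)
    (hη : 0 < η) (hlam0 : 0 ≤ lam) (hlam1 : lam < 1)
    (hβ0 : 0 ≤ β) (hβ1 : β < 1) (hε : 0 < ε) (hD : 0 ≤ Dinf) (hG : 0 ≤ G2)
    (F : Set (Fin d → ℝ)) (hFne : F.Nonempty) (hFconv : Convex ℝ F)
    (hFdiam : ∀ x ∈ F, ∀ y ∈ F, ∀ i, |x i - y i| ≤ Dinf)
    (θ : ℕ → Fin d → ℝ) (g : ℕ → Fin d → ℝ) (m : ℕ → Fin d → ℝ)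
    (f : ℕ → (Fin d → ℝ) → ℝ) (lr : ℕ → Fin d → ℝ)
    (hθF : ∀ t ∈ Finset.Icc 1 T, θ t ∈ F)
    (hg : ∀ t ∈ Finset.Icc 1 T, Real.sqrt (∑ i, g t i ^ 2) ≤ G2)
    (hsubgrad : ∀ t ∈ Finset.Icc 1 T, ∀ x ∈ F,
      f t (θ t) + ∑ i, g t i * (x i - θ t i) ≤ f t x)
    (hm1 : ∀ i, m 1 i = 0)
    (hmrec : ∀ t, 1 ≤ t → ∀ i, m (t + 1) i = β * m t i + (1 - β) * g t i)
    (hlr : ∀ t, 1 ≤ t → ∀ i,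
      lr t i = (η / Real.sqrt t) *
        (1 + lam ^ t * (g t i * m t i) / (|g t i| * (⨆ j, |m t j|) + ε)))
    (hproj : ∀ t ∈ Finset.Icc 1 T,
      θ (t + 1) ∈ F ∧
      ∀ x ∈ F,
        ∑ i, (lr t i)⁻¹ * (θ (t + 1) i - (θ t i - lr t i * g t i)) ^ 2 ≤
          ∑ i, (lr t i)⁻¹ * (x i - (θ t i - lr t i * g t i)) ^ 2) :
    ∀ θs ∈ F,
      ∑ t ∈ Finset.Icc 1 T, (f t (θ t) - f t θs) ≤
        Dinf ^ 2 * d / (η * (1 - lam) ^ 3) *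
            ((5 - 4 * lam) * Real.sqrt T + 2 * lam - 1)
          + Dinf ^ 2 * d / (2 * η * (1 - lam))
          + G2 ^ 2 * d * η * (2 * Real.sqrt T - 1) :=
  adarem_regret_bound_general d T hT η lam ε Dinf G2 hη hlam0 hlam1 hε F hFconv hFdiam θ g m f lr
    hθF hg hsubgrad hlr hproj
end

section
/- Per-step inner-product bound (Equation (9) in the proof of Theorem 1). Let d ≥ 1, let w ∈ ℝ^d have strictly positive coordinates w_i > 0, let F ⊆ ℝ^d be a nonempty convex set, let x_t ∈ F, g ∈ ℝ^d, and set z = x_t − (g₁/w₁, …, g_d/w_d). Suppose x_{t+1} ∈ F minimizes the function x ↦ ∑_{i=1}^d w_i·(x_i − z_i)² over F. Then for every x* ∈ F, ⟨g, x_t − x*⟩ ≤ (1/2)·[∑_{i=1}^d w_i·(x_{t,i} − x*_i)² − ∑_{i=1}^d w_i·(x_{t+1,i} − x*_i)²] + (1/2)·∑_{i=1}^d g_i²/w_i. -/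
/-- Per-step inner-product bound (Equation (9) in the proof of Theorem 1). -/
theorem adarem_per_step_bound
    (d : ℕ) (hd : 1 ≤ d) (w : Fin d → ℝ) (hw : ∀ i, 0 < w i)
    (F : Set (Fin d → ℝ)) (hFne : F.Nonempty) (hFconv : Convex ℝ F)
    (xt : Fin d → ℝ) (hxt : xt ∈ F) (g : Fin d → ℝ)
    (z : Fin d → ℝ) (hz : ∀ i, z i = xt i - g i / w i)
    (xt1 : Fin d → ℝ) (hxt1F : xt1 ∈ F)
    (hxt1 : ∀ x ∈ F, ∑ i, w i * (xt1 i - z i) ^ 2 ≤ ∑ i, w i * (x i - z i) ^ 2)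
    (xs : Fin d → ℝ) (hxs : xs ∈ F) :
    ∑ i, g i * (xt i - xs i) ≤
      (1 / 2) * (∑ i, w i * (xt i - xs i) ^ 2 - ∑ i, w i * (xt1 i - xs i) ^ 2)
        + (1 / 2) * ∑ i, g i ^ 2 / w i := by
  set A : ℝ := ∑ i, w i * (xt1 i - z i) * (xs i - xt1 i) with hA
  set B : ℝ := ∑ i, w i * (xs i - xt1 i) ^ 2 with hB
  have hB0 : 0 ≤ B := Finset.sum_nonneg fun i _ =>
    mul_nonneg (hw i).le (sq_nonneg _)
  -- variational inequality: A ≥ 0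
  have hvar : ∀ t : ℝ, 0 < t → t ≤ 1 → 0 ≤ 2 * t * A + t ^ 2 * B := by
    intro t ht0 ht1
    have hy : (1 - t) • xt1 + t • xs ∈ F :=
      hFconv hxt1F hxs (by linarith) ht0.le (by ring)
    have h := hxt1 _ hy
    have hexp : ∑ i, w i * (((1 - t) • xt1 + t • xs) i - z i) ^ 2
        = ∑ i, w i * (xt1 i - z i) ^ 2 + (2 * t * A + t ^ 2 * B) := by
      rw [hA, hB, Finset.mul_sum, Finset.mul_sum, ← Finset.sum_add_distrib,
        ← Finset.sum_add_distrib]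
      refine Finset.sum_congr rfl fun i _ => ?_
      simp only [Pi.add_apply, Pi.smul_apply, smul_eq_mul]
      ring
    rw [hexp] at h
    linarith
  have hA0 : 0 ≤ A := by
    by_contra hneg
    push_neg at hneg
    set t : ℝ := min 1 (-A / (B + 1)) with htdef
    have htpos : 0 < t := lt_min one_pos (div_pos (by linarith) (by linarith))
    have ht1 : t ≤ 1 := min_le_left _ _
    have ht2 : t ≤ -A / (B + 1) := min_le_right _ _
    have h := hvar t htpos ht1
    have hBt : t * B ≤ (-A / (B + 1)) * B := mul_le_mul_of_nonneg_right ht2 hB0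
    have hdiv : (-A / (B + 1)) * B < -2 * A := by
      rw [div_mul_eq_mul_div, div_lt_iff₀ (by linarith)]
      nlinarith
    nlinarith [sq_nonneg t, mul_pos htpos htpos]
  -- pointwise identity
  have key : ∀ i : Fin d, g i * (xt i - xs i)
      = (1 / 2) * (w i * (xt i - xs i) ^ 2) - (1 / 2) * (w i * (xt1 i - xs i) ^ 2)
        + (1 / 2) * (g i ^ 2 / w i)
        - (1 / 2) * (w i * (xt1 i - z i) ^ 2)
        - w i * (xt1 i - z i) * (xs i - xt1 i) := by
    intro i
    have hwi := (hw i).ne'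
    rw [hz i]
    field_simp
    ring
  have hC : 0 ≤ ∑ i, w i * (xt1 i - z i) ^ 2 :=
    Finset.sum_nonneg fun i _ => mul_nonneg (hw i).le (sq_nonneg _)
  calc ∑ i, g i * (xt i - xs i)
      = (1 / 2) * (∑ i, w i * (xt i - xs i) ^ 2 - ∑ i, w i * (xt1 i - xs i) ^ 2)
        + (1 / 2) * ∑ i, g i ^ 2 / w i
        - (1 / 2) * ∑ i, w i * (xt1 i - z i) ^ 2 - A := by
        rw [hA, Finset.sum_congr rfl fun i _ => key i]
        simp only [Finset.sum_sub_distrib, Finset.sum_add_distrib,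
          ← Finset.mul_sum]
        ring
    _ ≤ _ := by linarith
end

section
/- Lemma 2: bound on the total variation of inverse AdaRem step sizes. Let η > 0, λ ∈ [0,1), T ≥ 2, and let (c_t)_{t≥1} be a real sequence with |c_t| ≤ 1 for all t. Define η_t = (η/√t)·(1 + λ^t·c_t) for t ≥ 1. Then ∑_{t=2}^T |η_t^{−1} − η_{t−1}^{−1}| ≤ (2/(η·(1−λ)³))·((5 − 4λ)·√T + 2λ − 1). -/
/-!
Write `η_t⁻¹ = (√t / η) / x_t` with `x_t = 1 + λ^t c_t ∈ [1 - λ, 1 + λ]`. Each increment of `η_t⁻¹`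
splits into the change of the numerator, `(√t - √(t-1)) / (η (1 - λ))`, which telescopes to
`(√T - 1) / (η (1 - λ))`, and the change of the denominator, `|x_t - x_{t-1}| ≤ 2 λ^(t-1)`, which
contributes at most `2 √T λ^(t-1) / (η (1 - λ)²)` and sums geometrically. The stated bound
dominates the resulting one.
-/

open Finset Real

lemma abs_div_sub_div_le {d s r x y A B : ℝ} (hd : 0 < d) (hx : d ≤ x) (hy : d ≤ y)
    (hr : 0 ≤ r) (hrs : r ≤ s) (hsA : s ≤ A) (hxy : |x - y| ≤ B) :
    |s / x - r / y| ≤ A * B / d ^ 2 + (s - r) / d := by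
  have hx0 : 0 < x := hd.trans_le hx
  have hy0 : 0 < y := hd.trans_le hy
  have hs : 0 ≤ s := hr.trans hrs
  have h_denom : |s / x - s / y| ≤ A * B / d ^ 2 := by
    rw [div_sub_div _ _ hx0.ne' hy0.ne', mul_comm x s, ← mul_sub, abs_div, abs_mul,
      abs_of_nonneg hs, abs_of_pos (mul_pos hx0 hy0), abs_sub_comm, sq]
    exact div_le_div₀ (mul_nonneg (hs.trans hsA) ((abs_nonneg _).trans hxy))
      (mul_le_mul hsA hxy (abs_nonneg _) (hs.trans hsA)) (by positivity)
      (mul_le_mul hx hy hd.le hx0.le)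
  have h_numer : |s / y - r / y| ≤ (s - r) / d := by
    rw [div_sub_div_same, abs_div, abs_of_pos hy0, abs_of_nonneg (sub_nonneg.2 hrs)]
    exact div_le_div_of_nonneg_left (sub_nonneg.2 hrs) hd hy
  calc |s / x - r / y| ≤ |s / x - s / y| + |s / y - r / y| := abs_sub_le _ _ _
    _ ≤ A * B / d ^ 2 + (s - r) / d := add_le_add h_denom h_numer

lemma abs_pow_mul_le_pow {lam c : ℝ} (hlam0 : 0 ≤ lam) (hc : |c| ≤ 1) (n : ℕ) :
    |lam ^ n * c| ≤ lam ^ n := by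
  rw [abs_mul, abs_of_nonneg (pow_nonneg hlam0 n)]
  exact mul_le_of_le_one_right (pow_nonneg hlam0 n) hc

lemma one_sub_le_one_add_pow_mul {lam c : ℝ} (hlam0 : 0 ≤ lam) (hlam1 : lam ≤ 1) (hc : |c| ≤ 1)
    {n : ℕ} (hn : n ≠ 0) : 1 - lam ≤ 1 + lam ^ n * c := by
  linarith [neg_abs_le (lam ^ n * c), abs_pow_mul_le_pow hlam0 hc n,
    pow_le_of_le_one hlam0 hlam1 hn]

lemma abs_adarem_inv_step_succ_sub_le {η lam a b : ℝ} (hη : 0 < η) (hlam0 : 0 ≤ lam)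
    (hlam1 : lam < 1) (ha : |a| ≤ 1) (hb : |b| ≤ 1) {n T : ℕ} (hn : 1 ≤ n) (hnT : n + 1 ≤ T) :
    |((η / √(n + 1 : ℕ)) * (1 + lam ^ (n + 1) * a))⁻¹ - ((η / √n) * (1 + lam ^ n * b))⁻¹| ≤
      2 * √T / (η * (1 - lam) ^ 2) * lam ^ n + 1 / (η * (1 - lam)) * (√(n + 1 : ℕ) - √n) := by
  have inv_eq (u x : ℝ) : ((η / u) * x)⁻¹ = (u / η) / x := by
    rw [mul_inv, inv_div, div_eq_mul_inv _ x]
  have hsqrt_mono {m k : ℕ} (h : m ≤ k) : √m / η ≤ √k / η :=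
    div_le_div_of_nonneg_right (sqrt_le_sqrt (Nat.cast_le.2 h)) hη.le
  have hdiff : |(1 + lam ^ (n + 1) * a) - (1 + lam ^ n * b)| ≤ 2 * lam ^ n := by
    have htri := abs_sub (lam ^ (n + 1) * a) (lam ^ n * b)
    have hpow := pow_le_pow_of_le_one hlam0 hlam1.le (Nat.le_add_right n 1)
    rw [add_sub_add_left_eq_sub]
    linarith [abs_pow_mul_le_pow hlam0 ha (n + 1), abs_pow_mul_le_pow hlam0 hb n]
  rw [inv_eq, inv_eq]
  refine (abs_div_sub_div_le (sub_pos.2 hlam1)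
    (one_sub_le_one_add_pow_mul hlam0 hlam1.le ha n.succ_ne_zero)
    (one_sub_le_one_add_pow_mul hlam0 hlam1.le hb (by omega))
    (by positivity) (hsqrt_mono (Nat.le_add_right n 1)) (hsqrt_mono hnT) hdiff).trans_eq ?_
  field_simp

lemma sum_Icc_two_eq_sum_Ico_one {M : Type*} [AddCommMonoid M] (f : ℕ → M) (T : ℕ) :
    ∑ t ∈ Icc 2 T, f t = ∑ n ∈ Ico 1 T, f (n + 1) := by
  rw [sum_Ico_add', ← Ico_add_one_right_eq_Icc]

lemma sum_Ico_one_sqrt_succ_sub_sqrt {T : ℕ} (hT : 1 ≤ T) :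
    ∑ n ∈ Ico 1 T, (√(n + 1 : ℕ) - √n) = √T - 1 := by
  rw [sum_Ico_sub (fun n : ℕ => √n) hT, Nat.cast_one, sqrt_one]

lemma adarem_bound_le {η lam s : ℝ} (hη : 0 < η) (hlam0 : 0 ≤ lam) (hlam1 : lam < 1)
    (hs : 1 ≤ s) :
    2 * s / (η * (1 - lam) ^ 2) * (lam / (1 - lam)) + 1 / (η * (1 - lam)) * (s - 1) ≤
      2 / (η * (1 - lam) ^ 3) * ((5 - 4 * lam) * s + 2 * lam - 1) := by
  have hd : 0 < 1 - lam := sub_pos.2 hlam1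
  have hlhs : 2 * s / (η * (1 - lam) ^ 2) * (lam / (1 - lam)) + 1 / (η * (1 - lam)) * (s - 1) =
      (2 * s * lam + (s - 1) * (1 - lam) ^ 2) / (η * (1 - lam) ^ 3) := by
    field_simp
  rw [hlhs, div_mul_eq_mul_div]
  refine div_le_div_of_nonneg_right ?_ (by positivity)
  nlinarith [mul_nonneg (sub_nonneg.2 hs) (mul_nonneg hd.le (by linarith : (0 : ℝ) ≤ 9 + lam))]

/-- Lemma 2: bound on the total variation of inverse AdaRem step sizes. -/
theorem adarem_lemma2
    (η lam : ℝ) (hη : 0 < η) (hlam0 : 0 ≤ lam) (hlam1 : lam < 1)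
    (T : ℕ) (hT : 2 ≤ T)
    (c : ℕ → ℝ) (hc : ∀ t, 1 ≤ t → |c t| ≤ 1)
    (ηt : ℕ → ℝ)
    (hηt : ∀ t, 1 ≤ t → ηt t = (η / Real.sqrt t) * (1 + lam ^ t * c t)) :
    ∑ t ∈ Finset.Icc 2 T, |(ηt t)⁻¹ - (ηt (t - 1))⁻¹| ≤
      (2 / (η * (1 - lam) ^ 3)) * ((5 - 4 * lam) * Real.sqrt T + 2 * lam - 1) := by
  set C₁ := 2 * √T / (η * (1 - lam) ^ 2)
  set C₂ := 1 / (η * (1 - lam))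
  have hterm : ∀ n ∈ Ico 1 T, |(ηt (n + 1))⁻¹ - (ηt n)⁻¹| ≤
      C₁ * lam ^ n + C₂ * (√(n + 1 : ℕ) - √n) := by
    intro n hn
    obtain ⟨hn1, hnT⟩ := mem_Ico.1 hn
    rw [hηt (n + 1) (by omega), hηt n hn1]
    exact abs_adarem_inv_step_succ_sub_le hη hlam0 hlam1 (hc _ (by omega)) (hc n hn1) hn1 hnT
  calc ∑ t ∈ Icc 2 T, |(ηt t)⁻¹ - (ηt (t - 1))⁻¹|
      = ∑ n ∈ Ico 1 T, |(ηt (n + 1))⁻¹ - (ηt n)⁻¹| := by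
        simp only [sum_Icc_two_eq_sum_Ico_one _ T, Nat.add_sub_cancel]
    _ ≤ C₁ * ∑ n ∈ Ico 1 T, lam ^ n + C₂ * (√T - 1) := by
        rw [← sum_Ico_one_sqrt_succ_sub_sqrt (by omega), mul_sum, mul_sum, ← sum_add_distrib]
        exact sum_le_sum hterm
    _ ≤ C₁ * (lam / (1 - lam)) + C₂ * (√T - 1) := by
        gcongr
        simpa using geom_sum_Ico_le_of_lt_one (m := 1) (n := T) hlam0 hlam1
    _ ≤ _ := adarem_bound_le hη hlam0 hlam1 (one_le_sqrt.2 (by exact_mod_cast (by omega : 1 ≤ T)))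
end

section
/- Bound on consecutive differences of AdaRem step sizes (proof of Lemma 2). Let η > 0, λ ∈ [0,1), let t ≥ 1 be a natural number, and let c_t, c_{t+1} be reals with |c_t| ≤ 1 and |c_{t+1}| ≤ 1. Define η_t = (η/√t)·(1 + λ^t·c_t) and η_{t+1} = (η/√(t+1))·(1 + λ^{t+1}·c_{t+1}). Then |η_{t+1} − η_t| / η ≤ (2/√t)·(1/t + λ^t). -/
set_option maxHeartbeats 1000000


/-- Bound on consecutive differences of AdaRem step sizes (proof of Lemma 2). -/
theorem adarem_lemma2_consecutive_diff
    (η lam : ℝ) (hη : 0 < η) (hlam0 : 0 ≤ lam) (hlam1 : lam < 1)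
    (t : ℕ) (ht : 1 ≤ t)
    (ct ct1 : ℝ) (hct : |ct| ≤ 1) (hct1 : |ct1| ≤ 1) :
    |(η / Real.sqrt (t + 1)) * (1 + lam ^ (t + 1) * ct1)
        - (η / Real.sqrt t) * (1 + lam ^ t * ct)| / η ≤
      (2 / Real.sqrt t) * (1 / t + lam ^ t) := by
  have ht1 : (1:ℝ) ≤ t := by exact_mod_cast ht
  have ht0 : (0:ℝ) < t := by linarith
  set s := Real.sqrt t with hs_def
  set s1 := Real.sqrt ((t:ℝ)+1) with hs1_def
  have hs : 0 < s := Real.sqrt_pos.mpr ht0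
  have hs1 : 0 < s1 := Real.sqrt_pos.mpr (by linarith)
  have hss : s ≤ s1 := Real.sqrt_le_sqrt (by linarith)
  have hs2 : s^2 = t := Real.sq_sqrt ht0.le
  have hs12 : s1^2 = (t:ℝ)+1 := Real.sq_sqrt (by linarith)
  have hlt : lam ^ (t+1) ≤ lam ^ t :=
    pow_le_pow_of_le_one hlam0 hlam1.le (by omega)
  have hl0 : 0 ≤ lam ^ t := pow_nonneg hlam0 t
  have hl10 : 0 ≤ lam ^ (t+1) := pow_nonneg hlam0 (t+1)
  have h1 : (s1 - s) * (s1 + s) = 1 := by nlinarith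
  have hdiff : 1/s - 1/s1 ≤ 1/(t*s) := by
    rw [div_sub_div _ _ hs.ne' hs1.ne', div_le_div_iff₀ (by positivity) (by positivity)]
    nlinarith [mul_pos hs hs1, mul_pos ht0 hs]
  have heq : (η/s1)*(1+lam^(t+1)*ct1) - (η/s)*(1+lam^t*ct)
      = η * ((1/s1 - 1/s) + ((1/s1)*(lam^(t+1)*ct1) - (1/s)*(lam^t*ct))) := by
    ring
  rw [heq, abs_mul, abs_of_pos hη, mul_comm, mul_div_assoc, div_self hη.ne', mul_one]
  have htri : |(1/s1 - 1/s) + ((1/s1)*(lam^(t+1)*ct1) - (1/s)*(lam^t*ct))|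
      ≤ |1/s1 - 1/s| + |(1/s1)*(lam^(t+1)*ct1)| + |(1/s)*(lam^t*ct)| := by
    calc _ ≤ |1/s1 - 1/s| + |(1/s1)*(lam^(t+1)*ct1) - (1/s)*(lam^t*ct)| := abs_add_le _ _
      _ ≤ _ := by linarith [abs_sub ((1/s1)*(lam^(t+1)*ct1)) ((1/s)*(lam^t*ct))]
  have e1 : |1/s1 - 1/s| ≤ 1/(t*s) := by
    rw [abs_sub_comm, abs_of_nonneg (by
      have := one_div_le_one_div_of_le hs hss
      linarith)]
    exact hdiff
  have e2 : |(1/s1)*(lam^(t+1)*ct1)| ≤ (1/s) * lam^t := by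
    rw [abs_mul, abs_mul, abs_of_nonneg (by positivity), abs_of_nonneg hl10]
    have h1s : 1/s1 ≤ 1/s := one_div_le_one_div_of_le hs hss
    have hA : lam^(t+1) * |ct1| ≤ lam^t := by
      calc lam^(t+1) * |ct1| ≤ lam^(t+1) * 1 :=
            mul_le_mul_of_nonneg_left hct1 hl10
        _ = lam^(t+1) := mul_one _
        _ ≤ lam^t := hlt
    calc 1/s1 * (lam^(t+1) * |ct1|) ≤ 1/s * (lam^(t+1) * |ct1|) :=
          mul_le_mul_of_nonneg_right h1s (by positivity)
      _ ≤ 1/s * lam^t := mul_le_mul_of_nonneg_left hA (by positivity)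
  have e3 : |(1/s)*(lam^t*ct)| ≤ (1/s) * lam^t := by
    rw [abs_mul, abs_mul, abs_of_nonneg (by positivity), abs_of_nonneg hl0]
    have hA : lam^t * |ct| ≤ lam^t := by
      calc lam^t * |ct| ≤ lam^t * 1 := mul_le_mul_of_nonneg_left hct hl0
        _ = lam^t := mul_one _
    exact mul_le_mul_of_nonneg_left hA (by positivity)
  have hfin : 1/(t*s) + (1/s)*lam^t + (1/s)*lam^t ≤ (2/s)*(1/t + lam^t) := by
    rw [one_div, mul_inv, mul_add]
    have : (2/s)*(1/t) = 2 * ((t:ℝ)⁻¹ * s⁻¹) := by field_simp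
    rw [this]
    have h2 : 0 ≤ (t:ℝ)⁻¹ * s⁻¹ := by positivity
    have h3 : (2/s) * lam^t = (1/s)*lam^t + (1/s)*lam^t := by ring
    linarith [h3]
  calc _ ≤ |1/s1 - 1/s| + |(1/s1)*(lam^(t+1)*ct1)| + |(1/s)*(lam^t*ct)| := htri
    _ ≤ 1/(t*s) + (1/s)*lam^t + (1/s)*lam^t := by linarith
    _ ≤ _ := hfin
end
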